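/- arXiv:2007.11550 — 4 statements merged into one kernel-verified Lean document; each statement's English description precedes it below -/
import Mathlib

section
/- Let N be a finite-index subgroup of ℤ × ℤ and let r denote its index. Define M := {m ∈ ℤ × ℤ : for every n ∈ N, the standard inner product ⟨n, m⟩ = n₁m₁ + n₂m₂ is divisible by r}. Then M is exactly the image of N under rotation by π/2, i.e., M = {(−y, x) : (x, y) ∈ N}. -/
/-!
Since `⟨n, (-p.2, p.1)⟩ = -cross n p`, the claim is that `p ∈ N` iff `r` divides the determinant
`cross n p` for every `n ∈ N`. For a basis `g, h` of `N` the determinant `d = cross g h` satisfies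
`|d| = r`. By bilinearity `d ∣ cross n p` whenever `n, p ∈ N`; conversely Cramer's rule
`d • p = cross g p • h - cross h p • g` exhibits `p` as an integral combination of `g` and `h`
as soon as `d` divides both coefficients.
-/

open Module

def cross {R : Type*} [CommRing R] (u v : R × R) : R := u.1 * v.2 - u.2 * v.1

section CommRing

variable {R : Type*} [CommRing R]

theorem cross_add_smul_add_smul (a b c d : R) (g h : R × R) :
    cross (a • g + b • h) (c • g + d • h) = (a * d - b * c) * cross g h := by
  simp only [cross, Prod.fst_add, Prod.snd_add, Prod.smul_fst, Prod.smul_snd, smul_eq_mul]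
  ring

theorem cross_smul (g h p : R × R) : cross g h • p = cross g p • h - cross h p • g := by
  ext <;>
    simp only [cross, Prod.fst_sub, Prod.snd_sub, Prod.smul_fst, Prod.smul_snd, smul_eq_mul] <;>
    ring

theorem Module.Basis.finTwoProd_det (u v : R × R) :
    (Basis.finTwoProd R).det ![u, v] = cross u v := by
  simp only [det_apply, Matrix.det_fin_two, toMatrix_apply, coe_finTwoProd_repr, cross,
    Matrix.cons_val_zero, Matrix.cons_val_one, Matrix.cons_val_fin_one]
  ring

end CommRing

theorem Module.Basis.closure_pair_eq {M : Type*} [AddCommGroup M] {N : AddSubgroup M}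
    (b : Basis (Fin 2) ℤ N) : AddSubgroup.closure {(b 0 : M), (b 1 : M)} = N := by
  refine le_antisymm ((AddSubgroup.closure_le N).mpr ?_) (fun x hx => ?_)
  · simp [Set.insert_subset_iff]
  · rw [AddSubgroup.mem_closure_pair]
    refine ⟨b.repr ⟨x, hx⟩ 0, b.repr ⟨x, hx⟩ 1, ?_⟩
    have hx_repr := b.sum_repr ⟨x, hx⟩
    rw [Fin.sum_univ_two] at hx_repr
    exact congrArg Subtype.val hx_repr

theorem AddSubgroup.exists_closure_pair_eq_natAbs_cross_eq_index (N : AddSubgroup (ℤ × ℤ))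
    (hN : N.index ≠ 0) :
    ∃ g h : ℤ × ℤ, AddSubgroup.closure {g, h} = N ∧ (cross g h).natAbs = N.index := by
  have : N.FiniteIndex := ⟨hN⟩
  have hrank : finrank ℤ N = 2 := by
    rw [AddSubgroup.finrank_eq_of_finiteIndex, finrank_prod, finrank_self]
  let b : Basis (Fin 2) ℤ N := Module.finBasisOfFinrankEq ℤ N hrank
  refine ⟨b 0, b 1, b.closure_pair_eq, ?_⟩
  rw [AddSubgroup.index_eq_natAbs_det (Basis.finTwoProd ℤ) N b, ← Basis.finTwoProd_det]
  congr 2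
  funext i
  fin_cases i <;> rfl

theorem AddSubgroup.mem_iff_forall_index_dvd_cross (N : AddSubgroup (ℤ × ℤ)) (hN : N.index ≠ 0)
    (p : ℤ × ℤ) : p ∈ N ↔ ∀ n ∈ N, (N.index : ℤ) ∣ cross n p := by
  obtain ⟨g, h, rfl, hdet⟩ := N.exists_closure_pair_eq_natAbs_cross_eq_index hN
  have hd : cross g h ≠ 0 := Int.natAbs_ne_zero.mp (hdet ▸ hN)
  simp only [← hdet, Int.natAbs_dvd, AddSubgroup.mem_closure_pair]
  constructor
  · rintro ⟨c, d, rfl⟩ n ⟨a, b, rfl⟩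
    rw [cross_add_smul_add_smul]
    exact dvd_mul_left _ _
  · intro hp
    obtain ⟨α, hα⟩ := hp g ⟨1, 0, by simp⟩
    obtain ⟨β, hβ⟩ := hp h ⟨0, 1, by simp⟩
    refine ⟨-β, α, smul_right_injective _ hd ?_⟩
    change cross g h • _ = cross g h • p
    rw [cross_smul g h p, hα, hβ]
    module

/-- For a finite-index subgroup `N ≤ ℤ × ℤ` of index `r`, the set
`M = {m | ∀ n ∈ N, r ∣ ⟨n, m⟩}` is exactly the rotation of `N` by `π/2`,
i.e. the image of `N` under `(x, y) ↦ (-y, x)`. -/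
theorem dual_lattice_eq_rotation
    (N : AddSubgroup (ℤ × ℤ)) (hN : N.index ≠ 0) (r : ℕ) (hr : r = N.index) :
    {m : ℤ × ℤ | ∀ n ∈ N, (r : ℤ) ∣ n.1 * m.1 + n.2 * m.2}
      = (fun p : ℤ × ℤ => (-p.2, p.1)) '' (N : Set (ℤ × ℤ)) := by
  subst hr
  have hrot : Function.Injective (fun p : ℤ × ℤ => (-p.2, p.1)) := fun p q h => by
    simp only [Prod.mk.injEq, neg_inj] at h
    exact Prod.ext h.2 h.1
  ext m
  obtain ⟨p, rfl⟩ : ∃ p : ℤ × ℤ, (-p.2, p.1) = m := ⟨(m.2, -m.1), by simp⟩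
  rw [Set.mem_ofPred_eq, hrot.mem_set_image, SetLike.mem_coe, N.mem_iff_forall_index_dvd_cross hN]
  refine forall₂_congr fun n _ => ?_
  rw [← dvd_neg, cross]
  congr! 1
  ring
end

section
/- Let k, k' be integers with 0 ≤ k ≤ k' and k' > 0. For a positive integer s, let M_s := {(x, y) ∈ ℤ × ℤ : s divides y − kx}. Then: (1) a subgroup M ⊆ ℤ × ℤ contains the three points (1, k), (−1, k), (0, k + k') if and only if M = M_s for a unique positive divisor s of gcd(k + k', 2k); and (2) for each such s, the subgroup M_s has index s in ℤ × ℤ. -/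
/-!
Once `(1, k) ∈ M`, subtracting `x • (1, k)` shows that `M` is the preimage, under the surjective
shear `(x, y) ↦ y - k x`, of its trace `sℤ` on the `y`-axis; hence `M = M_s`, and the two other
vertices lie in `M_s` iff `s ∣ 2k` and `s ∣ k + k'`. Surjectivity of the shear also gives
`[ℤ² : M_s] = [ℤ : sℤ] = s`, which makes `s` unique.
-/

/-- The sublattice `M_s = {(x, y) : s ∣ y - k x}` of `ℤ × ℤ`. -/
def kiteSublattice (k : ℤ) (s : ℕ) : AddSubgroup (ℤ × ℤ) where
  carrier := {p : ℤ × ℤ | (s : ℤ) ∣ p.2 - k * p.1}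
  zero_mem' := by
    show (s : ℤ) ∣ (0 : ℤ × ℤ).2 - k * (0 : ℤ × ℤ).1
    simp
  add_mem' := by
    intro p q hp hq
    show (s : ℤ) ∣ (p + q).2 - k * (p + q).1
    simp only [Prod.fst_add, Prod.snd_add]
    have h : p.2 + q.2 - k * (p.1 + q.1) = (p.2 - k * p.1) + (q.2 - k * q.1) := by ring
    rw [h]
    exact dvd_add hp hq
  neg_mem' := by
    intro p hp
    show (s : ℤ) ∣ (-p).2 - k * (-p).1
    simp only [Prod.fst_neg, Prod.snd_neg]
    have h : -p.2 - k * -p.1 = -(p.2 - k * p.1) := by ring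
    rw [h]
    exact dvd_neg.2 hp

theorem mem_kiteSublattice {k : ℤ} {s : ℕ} {p : ℤ × ℤ} :
    p ∈ kiteSublattice k s ↔ (s : ℤ) ∣ p.2 - k * p.1 := Iff.rfl

def shearHom (k : ℤ) : ℤ × ℤ →+ ℤ := AddMonoidHom.snd ℤ ℤ - k • AddMonoidHom.fst ℤ ℤ

@[simp]
theorem shearHom_apply (k : ℤ) (p : ℤ × ℤ) : shearHom k p = p.2 - k * p.1 := rfl

theorem shearHom_surjective (k : ℤ) : Function.Surjective (shearHom k) :=
  fun t => ⟨(0, t), by simp⟩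

theorem kiteSublattice_eq_comap_shearHom (k : ℤ) (s : ℕ) :
    kiteSublattice k s = (AddSubgroup.zmultiples (s : ℤ)).comap (shearHom k) := by
  ext p
  rw [AddSubgroup.mem_comap, Int.mem_zmultiples_iff, shearHom_apply, mem_kiteSublattice]

theorem index_kiteSublattice (k : ℤ) (s : ℕ) : (kiteSublattice k s).index = s := by
  rw [kiteSublattice_eq_comap_shearHom,
    AddSubgroup.index_comap_of_surjective _ (shearHom_surjective k), Int.index_zmultiples,
    Int.natAbs_natCast]

theorem kiteSublattice_injective (k : ℤ) : Function.Injective (kiteSublattice k) :=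
  fun s t hst => by rw [← index_kiteSublattice k s, hst, index_kiteSublattice]

theorem AddSubgroup.exists_eq_zmultiples_natCast (H : AddSubgroup ℤ) :
    ∃ n : ℕ, H = AddSubgroup.zmultiples (n : ℤ) := by
  obtain ⟨a, rfl⟩ := Int.subgroup_cyclic H
  exact ⟨a.natAbs, by rw [Int.zmultiples_natAbs, AddSubgroup.zmultiples_eq_closure]⟩

theorem eq_comap_shearHom_of_mem {M : AddSubgroup (ℤ × ℤ)} {k : ℤ} (h : ((1 : ℤ), k) ∈ M) :
    M = (M.comap (AddMonoidHom.inr ℤ ℤ)).comap (shearHom k) := by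
  ext p
  have hshear : p + (-p.1) • ((1 : ℤ), k) = AddMonoidHom.inr ℤ ℤ (shearHom k p) := by
    ext <;> simp [mul_comm, sub_eq_add_neg]
  rw [AddSubgroup.mem_comap, AddSubgroup.mem_comap, ← hshear,
    add_mem_cancel_right (M.zsmul_mem h _)]

theorem exists_eq_kiteSublattice_of_mem {M : AddSubgroup (ℤ × ℤ)} {k : ℤ}
    (h : ((1 : ℤ), k) ∈ M) : ∃ s : ℕ, M = kiteSublattice k s := by
  obtain ⟨s, hs⟩ := (M.comap (AddMonoidHom.inr ℤ ℤ)).exists_eq_zmultiples_natCast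
  exact ⟨s, by rw [kiteSublattice_eq_comap_shearHom, ← hs, ← eq_comap_shearHom_of_mem h]⟩

theorem one_k_mem_kiteSublattice (k : ℤ) (s : ℕ) : ((1 : ℤ), k) ∈ kiteSublattice k s := by
  simp [mem_kiteSublattice]

theorem kite_vertices_mem_kiteSublattice_iff (k k' : ℤ) (s : ℕ) :
    (((-1 : ℤ), k) ∈ kiteSublattice k s ∧ ((0 : ℤ), k + k') ∈ kiteSublattice k s) ↔
      s ∣ Int.gcd (k + k') (2 * k) := by
  rw [← Int.natCast_dvd_natCast, Int.coe_gcd, dvd_gcd_iff]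
  simp only [mem_kiteSublattice, mul_neg, mul_one, sub_neg_eq_add, mul_zero, sub_zero, ← two_mul]
  exact and_comm

theorem kite_sublattice_classification_general (k k' : ℤ) (hk' : 0 < k') :
    (∀ M : AddSubgroup (ℤ × ℤ),
      (((1 : ℤ), k) ∈ M ∧ ((-1 : ℤ), k) ∈ M ∧ ((0 : ℤ), k + k') ∈ M) ↔
        ∃! s : ℕ, 0 < s ∧ s ∣ Int.gcd (k + k') (2 * k) ∧ M = kiteSublattice k s) ∧
    (∀ s : ℕ, 0 < s → s ∣ Int.gcd (k + k') (2 * k) →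
      (kiteSublattice k s).index = s) := by
  refine ⟨fun M => ⟨?_, ?_⟩, fun s _ _ => index_kiteSublattice k s⟩
  · rintro ⟨h1, h2, h3⟩
    obtain ⟨s, rfl⟩ := exists_eq_kiteSublattice_of_mem h1
    have hs := (kite_vertices_mem_kiteSublattice_iff k k' s).1 ⟨h2, h3⟩
    have hgcd : 0 < Int.gcd (k + k') (2 * k) := Int.gcd_pos_iff.2 (by omega)
    exact ⟨s, ⟨Nat.pos_of_dvd_of_pos hs hgcd, hs, rfl⟩,
      fun t ht => kiteSublattice_injective k ht.2.2.symm⟩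
  · rintro ⟨s, ⟨-, hs, rfl⟩, -⟩
    exact ⟨one_k_mem_kiteSublattice k s, (kite_vertices_mem_kiteSublattice_iff k k' s).2 hs⟩

/-- A subgroup `M ⊆ ℤ × ℤ` contains the three boundary lattice points
`(1, k)`, `(-1, k)`, `(0, k + k')` of the kite iff `M = M_s` for a unique
positive divisor `s` of `gcd (k + k') (2k)`; moreover each such `M_s`
has index `s` in `ℤ × ℤ`. -/
theorem kite_sublattice_classification (k k' : ℤ) (hk : 0 ≤ k) (hkk' : k ≤ k')
    (hk' : 0 < k') :
    (∀ M : AddSubgroup (ℤ × ℤ),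
      (((1 : ℤ), k) ∈ M ∧ ((-1 : ℤ), k) ∈ M ∧ ((0 : ℤ), k + k') ∈ M) ↔
        ∃! s : ℕ, 0 < s ∧ s ∣ Int.gcd (k + k') (2 * k) ∧ M = kiteSublattice k s) ∧
    (∀ s : ℕ, 0 < s → s ∣ Int.gcd (k + k') (2 * k) →
      (kiteSublattice k s).index = s) :=
  kite_sublattice_classification_general k k' hk'
end

section
/- Let k, k' be integers with 0 ≤ k ≤ k' and k' > 0, and let K ⊂ ℝ² be the convex hull of the four points (0,0), (1,k), (−1,k), (0,k+k'). Then the set of integer points lying in the topological interior of K is exactly {(0, j) : j ∈ ℤ, 0 < j < k + k'}; in particular, the number of interior lattice points of K is k + k' − 1. -/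
/-!
The kite is the region between the graphs of `x ↦ k * |x|` (convex) and `x ↦ k + k' - k' * |x|`
(concave), so its interior is where both inequalities are strict. A lattice point with `x ≠ 0`
has `|x| ≥ 1`, which would force `k < y < k`; on the axis `x = 0` the conditions read
`0 < y < k + k'`.
-/

open Set

theorem interior_setOf_le_and_le {X : Type*} [TopologicalSpace X] {f g : X → ℝ}
    (hf : Continuous f) (hg : Continuous g) :
    interior {p : X × ℝ | f p.1 ≤ p.2 ∧ p.2 ≤ g p.1} = {p | f p.1 < p.2 ∧ p.2 < g p.1} := by
  refine Subset.antisymm (fun p hp => ?_) (interior_maximal ?_ ?_)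
  · have hslice : p.2 ∈ interior (Icc (f p.1) (g p.1)) :=
      preimage_interior_subset_interior_preimage (continuous_const.prodMk continuous_id) hp
    rwa [interior_Icc] at hslice
  · exact fun p hp => ⟨hp.1.le, hp.2.le⟩
  · exact (isOpen_lt (hf.comp continuous_fst) continuous_snd).inter
      (isOpen_lt continuous_snd (hg.comp continuous_fst))

theorem convex_setOf_mul_abs_le_and_le {a b c : ℝ} (ha : 0 ≤ a) (hb : 0 ≤ b) :
    Convex ℝ {p : ℝ × ℝ | a * |p.1| ≤ p.2 ∧ p.2 ≤ c - b * |p.1|} := by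
  have hlow : ConvexOn ℝ univ fun x : ℝ => a * |x| := convexOn_univ_norm.smul ha
  have hup : ConcaveOn ℝ univ fun x : ℝ => c - b * |x| :=
    (concaveOn_const c convex_univ).sub (convexOn_univ_norm.smul hb)
  convert hlow.convex_epigraph.inter hup.convex_hypograph using 1
  ext p
  simp

theorem setOf_mul_abs_le_and_le_subset_convexHull {a b : ℝ} (hab : 0 < a + b) :
    {p : ℝ × ℝ | a * |p.1| ≤ p.2 ∧ p.2 ≤ a + b - b * |p.1|} ⊆
      convexHull ℝ {(0, 0), (1, a), (-1, a), (0, a + b)} := by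
  rintro ⟨x, y⟩ ⟨hlow, hup⟩
  -- barycentric coordinates: the positive and negative parts of `x` weight the side vertices
  let w : Fin 4 → ℝ := ![(a + b - b * |x| - y) / (a + b), x⁺, x⁻, (y - a * |x|) / (a + b)]
  let v : Fin 4 → ℝ × ℝ := ![(0, 0), (1, a), (-1, a), (0, a + b)]
  have hsplit : x⁺ + x⁻ = |x| := posPart_add_negPart x
  have hw₀ : ∀ i ∈ Finset.univ, 0 ≤ w i := by
    intro i _
    fin_cases i
    · exact div_nonneg (by linarith) hab.le
    · exact posPart_nonneg x
    · exact negPart_nonneg x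
    · exact div_nonneg (by linarith) hab.le
  have hw₁ : ∑ i, w i = 1 := by
    simp only [w, Fin.sum_univ_four, Matrix.cons_val]
    field_simp
    linear_combination (a + b) * hsplit
  have hwv : ∑ i, w i • v i = (x, y) := by
    simp only [w, v, Fin.sum_univ_four, Matrix.cons_val, Prod.smul_mk, smul_eq_mul, Prod.mk_add_mk,
      Prod.mk.injEq]
    constructor
    · simpa [sub_eq_add_neg] using posPart_sub_negPart x
    · field_simp
      linear_combination a * (a + b) * hsplit
  rw [← hwv]
  exact (convex_convexHull ℝ _).sum_mem hw₀ hw₁ fun i _ =>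
    subset_convexHull ℝ _ (by fin_cases i <;> simp [v])

theorem convexHull_kite {a b : ℝ} (ha : 0 ≤ a) (hb : 0 ≤ b) (hab : 0 < a + b) :
    convexHull ℝ {(0, 0), (1, a), (-1, a), (0, a + b)} =
      {p : ℝ × ℝ | a * |p.1| ≤ p.2 ∧ p.2 ≤ a + b - b * |p.1|} := by
  refine Subset.antisymm (convexHull_min ?_ (convex_setOf_mul_abs_le_and_le ha hb))
    (setOf_mul_abs_le_and_le_subset_convexHull hab)
  simp [insert_subset_iff, hab.le]

theorem int_mul_abs_lt_and_lt_iff {a b : ℝ} (ha : 0 ≤ a) (hb : 0 ≤ b) (m n : ℤ) :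
    (a * |(m : ℝ)| < n ∧ (n : ℝ) < a + b - b * |(m : ℝ)|) ↔ m = 0 ∧ 0 < n ∧ (n : ℝ) < a + b := by
  constructor
  · rintro ⟨hlow, hup⟩
    have hm : m = 0 := by
      by_contra hm
      -- off the axis `|m| ≥ 1`, so `a ≤ a * |m| < n < a + b - b * |m| ≤ a`
      have hone : (1 : ℝ) ≤ |(m : ℝ)| := by exact_mod_cast Int.one_le_abs hm
      nlinarith
    subst hm
    simp only [Int.cast_zero, abs_zero, mul_zero, sub_zero] at hlow hup
    exact ⟨rfl, by exact_mod_cast hlow, hup⟩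
  · rintro ⟨rfl, hpos, hlt⟩
    simpa using ⟨hpos, hlt⟩

theorem ncard_setOf_fst_eq_zero_and_snd_mem_Ioo (N : ℤ) :
    {p : ℤ × ℤ | p.1 = 0 ∧ 0 < p.2 ∧ p.2 < N}.ncard = (N - 1).toNat := by
  have hprod : {p : ℤ × ℤ | p.1 = 0 ∧ 0 < p.2 ∧ p.2 < N} = {0} ×ˢ Ioo 0 N := by
    ext p; simp
  rw [hprod, ncard_prod, ncard_singleton, one_mul, ← Finset.coe_Ioo, ncard_coe_finset,
    Int.card_Ioo, sub_zero]

theorem kite_interior_lattice_points_general (k k' : ℕ) (hk' : 0 < k')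
    (K : Set (ℝ × ℝ))
    (hK : K = convexHull ℝ
      {((0 : ℝ), (0 : ℝ)), ((1 : ℝ), (k : ℝ)), ((-1 : ℝ), (k : ℝ)),
        ((0 : ℝ), (k : ℝ) + (k' : ℝ))}) :
    {p : ℤ × ℤ | ((p.1 : ℝ), (p.2 : ℝ)) ∈ interior K}
        = {p : ℤ × ℤ | p.1 = 0 ∧ 0 < p.2 ∧ p.2 < (k : ℤ) + (k' : ℤ)} ∧
      Set.ncard {p : ℤ × ℤ | ((p.1 : ℝ), (p.2 : ℝ)) ∈ interior K} = k + k' - 1 := by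
  have hk : (0 : ℝ) ≤ k := k.cast_nonneg
  have hk'₀ : (0 : ℝ) ≤ k' := k'.cast_nonneg
  have hint : interior K = {p : ℝ × ℝ | k * |p.1| < p.2 ∧ p.2 < k + k' - k' * |p.1|} := by
    rw [hK, convexHull_kite hk hk'₀ (by positivity),
      interior_setOf_le_and_le (f := fun x => k * |x|) (g := fun x => k + k' - k' * |x|)
        (by fun_prop) (by fun_prop)]
  have hset : {p : ℤ × ℤ | ((p.1 : ℝ), (p.2 : ℝ)) ∈ interior K}
      = {p : ℤ × ℤ | p.1 = 0 ∧ 0 < p.2 ∧ p.2 < (k : ℤ) + (k' : ℤ)} := by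
    ext ⟨m, n⟩
    simp only [hint, mem_ofPred_eq, int_mul_abs_lt_and_lt_iff hk hk'₀]
    norm_cast
  refine ⟨hset, ?_⟩
  rw [hset, ncard_setOf_fst_eq_zero_and_snd_mem_Ioo]
  omega

/-- The integer points in the topological interior of the kite with vertices
`(0,0)`, `(1,k)`, `(-1,k)`, `(0,k+k')` are exactly `(0, j)` for `0 < j < k + k'`;
in particular there are `k + k' - 1` of them. -/
theorem kite_interior_lattice_points (k k' : ℕ) (hkk' : k ≤ k') (hk' : 0 < k')
    (K : Set (ℝ × ℝ))
    (hK : K = convexHull ℝ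
      {((0 : ℝ), (0 : ℝ)), ((1 : ℝ), (k : ℝ)), ((-1 : ℝ), (k : ℝ)),
        ((0 : ℝ), (k : ℝ) + (k' : ℝ))}) :
    {p : ℤ × ℤ | ((p.1 : ℝ), (p.2 : ℝ)) ∈ interior K}
        = {p : ℤ × ℤ | p.1 = 0 ∧ 0 < p.2 ∧ p.2 < (k : ℤ) + (k' : ℤ)} ∧
      Set.ncard {p : ℤ × ℤ | ((p.1 : ℝ), (p.2 : ℝ)) ∈ interior K} = k + k' - 1 :=
  kite_interior_lattice_points_general k k' hk' K hK
end

section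
/- Let G be an abelian group written additively, let d, m, n be nonnegative integers, let a, b be integers with a·m + b·n = 1, and let Q, R ∈ G satisfy (d·m)·Q = (d·n)·R. Set S' := a·R + b·Q. Then d·(Q − n·S') = 0 and d·(R − m·S') = 0; that is, Q − n·S' and R − m·S' are d-torsion elements. -/
/-!
Since `a m + b n = 1`, the element `Q - n S'` equals `a (m Q - n R)` and `R - m S'` equals
`b (n R - m Q)`; both are multiples of `m Q - n R`, which is killed by `d`.
-/

section Bezout

variable {k M : Type*} [CommRing k] [AddCommGroup M] [Module k M]

theorem sub_smul_bezout_eq_smul_sub {a b m n : k} (hab : a * m + b * n = 1) (Q R : M) :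
    Q - n • (a • R + b • Q) = a • (m • Q - n • R) := by
  have h : a * m + b * n - 1 = 0 := sub_eq_zero.mpr hab
  linear_combination (norm := module) -(h • Q)

end Bezout

/-- In an abelian group, if `a m + b n = 1` and `(d m) • Q = (d n) • R`, then
`Q - n • S'` and `R - m • S'` are `d`-torsion, where `S' = a • R + b • Q`. -/
theorem torsion_of_bezout_relation {G : Type*} [AddCommGroup G]
    (d m n : ℕ) (a b : ℤ) (hab : a * (m : ℤ) + b * (n : ℤ) = 1)
    (Q R : G) (hQR : ((d : ℤ) * (m : ℤ)) • Q = ((d : ℤ) * (n : ℤ)) • R) :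
    (d : ℤ) • (Q - (n : ℤ) • (a • R + b • Q)) = 0 ∧
      (d : ℤ) • (R - (m : ℤ) • (a • R + b • Q)) = 0 := by
  have hd : (d : ℤ) • ((m : ℤ) • Q - (n : ℤ) • R) = 0 := by
    rw [smul_sub, smul_smul, smul_smul, hQR, sub_self]
  have hba : b * (n : ℤ) + a * (m : ℤ) = 1 := by rw [add_comm, hab]
  constructor
  · rw [sub_smul_bezout_eq_smul_sub hab, smul_comm, hd, smul_zero]
  · rw [add_comm, sub_smul_bezout_eq_smul_sub hba, ← neg_sub, smul_neg, smul_neg, smul_comm, hd,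
      smul_zero, neg_zero]
end
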